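/- For all positive semidefinite d×d matrices δ and θ with tr(δ) ≤ 1 and tr(θ) ≤ 1, and every schedule s: t_s(δ) ≤ t_s(θ) + ‖δ − θ‖_*, where ‖A‖_* = tr(√(A†A)) is the trace norm; consequently t(δ) ≤ t(θ) + ‖δ − θ‖_*. -/

import Mathlib

noncomputable section
open Matrix
open scoped ComplexOrder

variable {d m r : ℕ}

/-- One step of process `i`: `T_i(ρ) = E_i(M₁ ρ M₁†) = ∑_j (E_{i,j} M₁) ρ (E_{i,j} M₁)†`. -/
def Tstep (E : Fin m → Fin r → Matrix (Fin d) (Fin d) ℂ)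
    (M1 : Matrix (Fin d) (Fin d) ℂ) (i : Fin m)
    (ρ : Matrix (Fin d) (Fin d) ℂ) : Matrix (Fin d) (Fin d) ℂ :=
  ∑ j, (E i j * M1) * ρ * (E i j * M1)ᴴ

/-- `T_f` for a word `f = s₁⋯s_n`: apply `T_{s₁}` first, then `T_{s₂}`, …, `T_{s_n}`. -/
def Tword (E : Fin m → Fin r → Matrix (Fin d) (Fin d) ℂ)
    (M1 : Matrix (Fin d) (Fin d) ℂ) (f : List (Fin m))
    (ρ : Matrix (Fin d) (Fin d) ℂ) : Matrix (Fin d) (Fin d) ℂ :=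
  f.foldl (fun σ k => Tstep E M1 k σ) ρ

/-- The support of a matrix: its column space, as a subspace of `ℂ^d`. -/
def supp (A : Matrix (Fin d) (Fin d) ℂ) : Submodule ℂ (Fin d → ℂ) :=
  LinearMap.range (Matrix.toLin' A)

/-- Length-`n` prefix of a schedule. -/
def prefixn (s : ℕ → Fin m) (n : ℕ) : List (Fin m) :=
  List.ofFn (fun i : Fin n => s i)

/-- Termination probability within a word `f`. -/
def tWord (E : Fin m → Fin r → Matrix (Fin d) (Fin d) ℂ)
    (M0 M1 : Matrix (Fin d) (Fin d) ℂ) (f : List (Fin m))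
    (ρ : Matrix (Fin d) (Fin d) ℂ) : ℝ :=
  ∑ n ∈ Finset.range (f.length + 1),
    (M0 * Tword E M1 (f.take n) ρ * M0ᴴ).trace.re

/-- Termination probability along a schedule `s`. -/
def tSched (E : Fin m → Fin r → Matrix (Fin d) (Fin d) ℂ)
    (M0 M1 : Matrix (Fin d) (Fin d) ℂ) (s : ℕ → Fin m)
    (ρ : Matrix (Fin d) (Fin d) ℂ) : ℝ :=
  ∑' n : ℕ, (M0 * Tword E M1 (prefixn s n) ρ * M0ᴴ).trace.re

/-- Termination probability `t(ρ)`: infimum over all schedules. -/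
def tInf (E : Fin m → Fin r → Matrix (Fin d) (Fin d) ℂ)
    (M0 M1 : Matrix (Fin d) (Fin d) ℂ)
    (ρ : Matrix (Fin d) (Fin d) ℂ) : ℝ :=
  ⨅ s : ℕ → Fin m, tSched E M0 M1 s ρ

/-- The reachable space `H_{R(ρ)}`. -/
def HR (E : Fin m → Fin r → Matrix (Fin d) (Fin d) ℂ)
    (M1 : Matrix (Fin d) (Fin d) ℂ)
    (ρ : Matrix (Fin d) (Fin d) ℂ) : Submodule ℂ (Fin d → ℂ) :=
  ⨆ f : List (Fin m), supp (Tword E M1 f ρ)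

/-- The average super-operator `T = (1/m) ∑ T_i`. -/
def Tavg (E : Fin m → Fin r → Matrix (Fin d) (Fin d) ℂ)
    (M1 : Matrix (Fin d) (Fin d) ℂ)
    (ρ : Matrix (Fin d) (Fin d) ℂ) : Matrix (Fin d) (Fin d) ℂ :=
  ((m : ℂ)⁻¹) • ∑ i : Fin m, Tstep E M1 i ρ

/-- `H_{R̄_n(ρ)} = ⋁_{k=0}^n supp(T^k(ρ))`. -/
def HRbar (E : Fin m → Fin r → Matrix (Fin d) (Fin d) ℂ)
    (M1 : Matrix (Fin d) (Fin d) ℂ)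
    (ρ : Matrix (Fin d) (Fin d) ℂ) (n : ℕ) : Submodule ℂ (Fin d → ℂ) :=
  ⨆ k : Fin (n + 1), supp ((Tavg E M1)^[k] ρ)

/-- Reachable termination probability `h(ρ)`. -/
def hProb (E : Fin m → Fin r → Matrix (Fin d) (Fin d) ℂ)
    (M0 M1 : Matrix (Fin d) (Fin d) ℂ)
    (ρ : Matrix (Fin d) (Fin d) ℂ) : ℝ :=
  sInf { x : ℝ | ∃ σ : Matrix (Fin d) (Fin d) ℂ,
    σ.PosSemidef ∧ σ.trace = 1 ∧ supp σ ≤ HR E M1 ρ ∧ x = tInf E M0 M1 σ }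

/-- `PD_f`: pure states diverging within the word `f`. -/
def PDword (E : Fin m → Fin r → Matrix (Fin d) (Fin d) ℂ)
    (M0 M1 : Matrix (Fin d) (Fin d) ℂ) (f : List (Fin m)) : Set (Fin d → ℂ) :=
  { x : Fin d → ℂ | tWord E M0 M1 f (Matrix.vecMulVec x (star x)) = 0 }

/-- `PD_n`: union of `PD_f` over words of length `n`. -/
def PDn (E : Fin m → Fin r → Matrix (Fin d) (Fin d) ℂ)
    (M0 M1 : Matrix (Fin d) (Fin d) ℂ) (n : ℕ) : Set (Fin d → ℂ) :=
  { x : Fin d → ℂ | ∃ f : List (Fin m), f.length = n ∧ x ∈ PDword E M0 M1 f }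

/-- `PD`: the diverging pure states. -/
def PD (E : Fin m → Fin r → Matrix (Fin d) (Fin d) ℂ)
    (M0 M1 : Matrix (Fin d) (Fin d) ℂ) : Set (Fin d → ℂ) :=
  { x : Fin d → ℂ | ∃ s : ℕ → Fin m, tSched E M0 M1 s (Matrix.vecMulVec x (star x)) = 0 }

/-- The positive semidefinite square root of a PSD matrix (the definition `Matrix.PosSemidef.sqrt`
of the older Mathlib, which has since been removed). -/
def Matrix.PosSemidef.sqrt {n : Type*} [Fintype n] [DecidableEq n] {A : Matrix n n ℂ}
    (hA : A.PosSemidef) : Matrix n n ℂ :=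
  hA.1.eigenvectorUnitary.1 * Matrix.diagonal ((↑) ∘ (fun x : ℝ => Real.sqrt x) ∘ hA.1.eigenvalues) *
    (star hA.1.eigenvectorUnitary : Matrix n n ℂ)

/-- The trace norm `‖A‖_* = tr √(A†A)`. -/
def traceNorm (A : Matrix (Fin d) (Fin d) ℂ) : ℝ :=
  (Matrix.posSemidef_conjTranspose_mul_self A).sqrt.trace.re

/-!
The maps `T_f` are linear and preserve positivity, and the termination terms telescope:
`tr (M₀ σ M₀†) = tr σ - tr T_i(σ)`. Hence `t_s(ρ) ≤ tr ρ` for `ρ ⪰ 0`, and `t_s` is additive on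
differences of positive matrices. Splitting `δ - θ = P - N` into its positive and negative parts,
`t_s(δ) - t_s(θ) = t_s(P) - t_s(N) ≤ tr P ≤ tr P + tr N = tr |δ - θ| = ‖δ - θ‖_*`.
-/

open scoped MatrixOrder

theorem Matrix.PosSemidef.sqrt_eq_cfcSqrt {n : Type*} [Fintype n] [DecidableEq n]
    {A : Matrix n n ℂ} (hA : A.PosSemidef) : hA.sqrt = CFC.sqrt A := by
  rw [CFC.sqrt_eq_real_sqrt A hA.nonneg, cfcₙ_eq_cfc, hA.1.cfc_eq, IsHermitian.cfc,
    PosSemidef.sqrt]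
  simp [Unitary.conjStarAlgAut_apply]

theorem traceNorm_eq_re_trace_cfcAbs (A : Matrix (Fin d) (Fin d) ℂ) :
    traceNorm A = (CFC.abs A).trace.re := by
  rw [traceNorm, PosSemidef.sqrt_eq_cfcSqrt, CFC.abs, star_eq_conjTranspose]

theorem Matrix.PosSemidef.re_trace_nonneg {n : Type*} [Fintype n] {A : Matrix n n ℂ}
    (hA : A.PosSemidef) : 0 ≤ A.trace.re :=
  (Complex.nonneg_iff.mp hA.trace_nonneg).1

theorem re_trace_posPart_le_traceNorm {A : Matrix (Fin d) (Fin d) ℂ} (hA : A.IsHermitian) :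
    (A⁺).trace.re ≤ traceNorm A := by
  have hneg : 0 ≤ (A⁻).trace.re :=
    (nonneg_iff_posSemidef.mp (CFC.negPart_nonneg A)).re_trace_nonneg
  rw [traceNorm_eq_re_trace_cfcAbs, ← CFC.posPart_add_negPart A hA.isSelfAdjoint, trace_add,
    Complex.add_re]
  linarith

section Termination

variable {E : Fin m → Fin r → Matrix (Fin d) (Fin d) ℂ} {M0 M1 : Matrix (Fin d) (Fin d) ℂ}

theorem Tstep_sub (i : Fin m) (x y : Matrix (Fin d) (Fin d) ℂ) :
    Tstep E M1 i (x - y) = Tstep E M1 i x - Tstep E M1 i y := by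
  simp only [Tstep, Matrix.mul_sub, Matrix.sub_mul, Finset.sum_sub_distrib]

theorem Tword_sub (f : List (Fin m)) (x y : Matrix (Fin d) (Fin d) ℂ) :
    Tword E M1 f (x - y) = Tword E M1 f x - Tword E M1 f y := by
  induction f generalizing x y with
  | nil => rfl
  | cons i f ih => exact (congrArg (Tword E M1 f) (Tstep_sub i x y)).trans (ih _ _)

theorem Tstep_posSemidef (i : Fin m) {x : Matrix (Fin d) (Fin d) ℂ} (hx : x.PosSemidef) :
    (Tstep E M1 i x).PosSemidef :=
  posSemidef_sum _ fun j _ => hx.mul_mul_conjTranspose_same (E i j * M1)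

theorem Tword_posSemidef (f : List (Fin m)) {x : Matrix (Fin d) (Fin d) ℂ}
    (hx : x.PosSemidef) : (Tword E M1 f x).PosSemidef := by
  induction f generalizing x with
  | nil => exact hx
  | cons i f ih => exact ih (Tstep_posSemidef i hx)

theorem Tword_prefixn_succ (s : ℕ → Fin m) (n : ℕ) (ρ : Matrix (Fin d) (Fin d) ℂ) :
    Tword E M1 (prefixn s (n + 1)) ρ = Tstep E M1 (s n) (Tword E M1 (prefixn s n) ρ) := by
  rw [prefixn, List.ofFn_succ_last, Tword, List.foldl_concat]
  rfl

theorem trace_Tstep (hE : ∀ i, ∑ j, (E i j)ᴴ * E i j = 1) (i : Fin m)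
    (x : Matrix (Fin d) (Fin d) ℂ) : (Tstep E M1 i x).trace = (M1ᴴ * M1 * x).trace := by
  calc (Tstep E M1 i x).trace
      = ∑ j, (M1ᴴ * ((E i j)ᴴ * E i j) * M1 * x).trace := by
        rw [Tstep, trace_sum]
        refine Finset.sum_congr rfl fun j _ => ?_
        rw [trace_mul_cycle]
        simp only [conjTranspose_mul, Matrix.mul_assoc]
    _ = (M1ᴴ * M1 * x).trace := by
        rw [← trace_sum, ← Finset.sum_mul, ← Finset.sum_mul, ← Finset.mul_sum, hE, Matrix.mul_one]

theorem trace_conj_M0_eq_sub_trace_Tstep (hE : ∀ i, ∑ j, (E i j)ᴴ * E i j = 1) (hM : M0ᴴ * M0 + M1ᴴ * M1 = 1)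
    (i : Fin m) (σ : Matrix (Fin d) (Fin d) ℂ) :
    (M0 * σ * M0ᴴ).trace = σ.trace - (Tstep E M1 i σ).trace := by
  rw [trace_Tstep hE, trace_mul_cycle, eq_sub_of_add_eq hM, Matrix.sub_mul, trace_sub,
    Matrix.one_mul]

variable (s : ℕ → Fin m) {ρ σ : Matrix (Fin d) (Fin d) ℂ}

theorem termination_nonneg (hρ : ρ.PosSemidef) (n : ℕ) :
    0 ≤ (M0 * Tword E M1 (prefixn s n) ρ * M0ᴴ).trace.re :=
  ((Tword_posSemidef _ hρ).mul_mul_conjTranspose_same M0).re_trace_nonneg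

theorem tSched_nonneg (hρ : ρ.PosSemidef) : 0 ≤ tSched E M0 M1 s ρ :=
  tsum_nonneg (termination_nonneg s hρ)

variable (hE : ∀ i, ∑ j, (E i j)ᴴ * E i j = 1) (hM : M0ᴴ * M0 + M1ᴴ * M1 = 1)
include hE hM

theorem sum_range_termination_eq_sub (N : ℕ) :
    ∑ n ∈ Finset.range N, (M0 * Tword E M1 (prefixn s n) ρ * M0ᴴ).trace.re =
      ρ.trace.re - (Tword E M1 (prefixn s N) ρ).trace.re := by
  have htelescope (n : ℕ) : (M0 * Tword E M1 (prefixn s n) ρ * M0ᴴ).trace.re =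
      (Tword E M1 (prefixn s n) ρ).trace.re - (Tword E M1 (prefixn s (n + 1)) ρ).trace.re := by
    rw [trace_conj_M0_eq_sub_trace_Tstep hE hM (s n), Tword_prefixn_succ, Complex.sub_re]
  rw [Finset.sum_congr rfl fun n _ => htelescope n]
  exact Finset.sum_range_sub' (fun n => (Tword E M1 (prefixn s n) ρ).trace.re) N

theorem sum_range_termination_le (hρ : ρ.PosSemidef) (N : ℕ) :
    ∑ n ∈ Finset.range N, (M0 * Tword E M1 (prefixn s n) ρ * M0ᴴ).trace.re ≤ ρ.trace.re := by
  rw [sum_range_termination_eq_sub s hE hM]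
  linarith [(Tword_posSemidef (E := E) (M1 := M1) (prefixn s N) hρ).re_trace_nonneg]

theorem summable_termination (hρ : ρ.PosSemidef) :
    Summable fun n => (M0 * Tword E M1 (prefixn s n) ρ * M0ᴴ).trace.re :=
  summable_of_sum_range_le (termination_nonneg s hρ) (sum_range_termination_le s hE hM hρ)

theorem tSched_le_re_trace (hρ : ρ.PosSemidef) : tSched E M0 M1 s ρ ≤ ρ.trace.re :=
  Real.tsum_le_of_sum_range_le (termination_nonneg s hρ) (sum_range_termination_le s hE hM hρ)

theorem tSched_sub (hρ : ρ.PosSemidef) (hσ : σ.PosSemidef) :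
    tSched E M0 M1 s (ρ - σ) = tSched E M0 M1 s ρ - tSched E M0 M1 s σ := by
  simp only [tSched, Tword_sub, Matrix.mul_sub, Matrix.sub_mul, trace_sub, Complex.sub_re]
  exact (summable_termination s hE hM hρ).tsum_sub (summable_termination s hE hM hσ)

theorem tSched_sub_le_re_trace (hρ : ρ.PosSemidef) (hσ : σ.PosSemidef) :
    tSched E M0 M1 s (ρ - σ) ≤ ρ.trace.re := by
  rw [tSched_sub s hE hM hρ hσ]
  linarith [tSched_le_re_trace s hE hM hρ, tSched_nonneg (E := E) (M0 := M0) (M1 := M1) s hσ]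

end Termination

theorem tSched_le_add_traceNorm_general (d m r : ℕ) (hm : 0 < m)
    (E : Fin m → Fin r → Matrix (Fin d) (Fin d) ℂ)
    (hE : ∀ i, ∑ j, (E i j)ᴴ * E i j = 1)
    (M0 M1 : Matrix (Fin d) (Fin d) ℂ)
    (hM : M0ᴴ * M0 + M1ᴴ * M1 = 1)
    (δ θ : Matrix (Fin d) (Fin d) ℂ)
    (hδ : δ.PosSemidef) (hθ : θ.PosSemidef) :
    (∀ s : ℕ → Fin m,
      tSched E M0 M1 s δ ≤ tSched E M0 M1 s θ + traceNorm (δ - θ)) ∧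
    tInf E M0 M1 δ ≤ tInf E M0 M1 θ + traceNorm (δ - θ) := by
  have hA : (δ - θ).IsHermitian := hδ.1.sub hθ.1
  have hpos := nonneg_iff_posSemidef.mp (CFC.posPart_nonneg (δ - θ))
  have hneg := nonneg_iff_posSemidef.mp (CFC.negPart_nonneg (δ - θ))
  have hsched (s : ℕ → Fin m) :
      tSched E M0 M1 s δ ≤ tSched E M0 M1 s θ + traceNorm (δ - θ) :=
    calc tSched E M0 M1 s δ
        = tSched E M0 M1 s θ + tSched E M0 M1 s ((δ - θ)⁺ - (δ - θ)⁻) := by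
          rw [CFC.posPart_sub_negPart _ hA.isSelfAdjoint, tSched_sub s hE hM hδ hθ]
          ring
      _ ≤ tSched E M0 M1 s θ + ((δ - θ)⁺).trace.re := by
          gcongr
          exact tSched_sub_le_re_trace s hE hM hpos hneg
      _ ≤ tSched E M0 M1 s θ + traceNorm (δ - θ) := by
          gcongr
          exact re_trace_posPart_le_traceNorm hA
  refine ⟨hsched, ?_⟩
  have : Nonempty (Fin m) := Fin.pos_iff_nonempty.mp hm
  have hbdd : BddBelow (Set.range fun s => tSched E M0 M1 s δ) :=
    ⟨0, Set.forall_mem_range.mpr fun s => tSched_nonneg s hδ⟩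
  have hinf : tInf E M0 M1 δ - traceNorm (δ - θ) ≤ tInf E M0 M1 θ :=
    le_ciInf fun s => sub_le_iff_le_add.mpr ((ciInf_le hbdd s).trans (hsched s))
  linarith

/-- `t_s(δ) ≤ t_s(θ) + ‖δ − θ‖_*`, and consequently
`t(δ) ≤ t(θ) + ‖δ − θ‖_*`. -/
theorem tSched_le_add_traceNorm (d m r : ℕ) (hd : 0 < d) (hm : 0 < m)
    (E : Fin m → Fin r → Matrix (Fin d) (Fin d) ℂ)
    (hE : ∀ i, ∑ j, (E i j)ᴴ * E i j = 1)
    (M0 M1 : Matrix (Fin d) (Fin d) ℂ)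
    (hM : M0ᴴ * M0 + M1ᴴ * M1 = 1)
    (δ θ : Matrix (Fin d) (Fin d) ℂ)
    (hδ : δ.PosSemidef) (hθ : θ.PosSemidef)
    (htrδ : δ.trace ≤ 1) (htrθ : θ.trace ≤ 1) :
    (∀ s : ℕ → Fin m,
      tSched E M0 M1 s δ ≤ tSched E M0 M1 s θ + traceNorm (δ - θ)) ∧
    tInf E M0 M1 δ ≤ tInf E M0 M1 θ + traceNorm (δ - θ) :=
  tSched_le_add_traceNorm_general d m r hm E hE M0 M1 hM δ θ hδ hθ
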